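/- Let p > 3 be a prime and let G = Φ₃₇(1⁶) be the group of order p⁶ with presentation on generators α, α₁, α₂, α₃, α₄, α₅ and relations [αᵢ,α] = αᵢ₊₁ for i = 1,2,3, [α₂,α₃] = α₅, [α₃,α₁] = α₅, [α₄,α₁] = α₅, αᵖ = α₁ᵖ = α₂ᵖ = α₃ᵖ = α₄ᵖ = α₅ᵖ = 1, with every commutator of a pair of generators not listed among these relations declared trivial. Then the Bogomolov multiplier B₀(G) is trivial. -/

import Mathlib

/-!
Φ₃₇(1⁶): relations [αᵢ,α]=αᵢ₊₁ (i=1,2,3), [α₂,α₃]=α₅, [α₃,α₁]=α₅, [α₄,α₁]=α₅,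
all pth powers trivial.
-/

namespace Stmt12

/-- The additive group `ℚ/ℤ`. -/
abbrev QZ : Type := ℚ ⧸ AddSubgroup.zmultiples (1 : ℚ)

/-- An inhomogeneous 2-cocycle on `G` with values in `ℚ/ℤ` (trivial `G`-action). -/
def IsTwoCocycle {G : Type} [Group G] (f : G → G → QZ) : Prop :=
  ∀ g h j : G, f h j - f (g * h) j + f g (h * j) - f g h = 0

/-- An inhomogeneous 2-coboundary on `G` with values in `ℚ/ℤ` (trivial `G`-action). -/
def IsTwoCoboundary {G : Type} [Group G] (f : G → G → QZ) : Prop :=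
  ∃ c : G → QZ, ∀ g h : G, f g h = c h - c (g * h) + c g

/-- A subgroup is bicyclic if it is abelian and generated by at most two elements
(equivalently, cyclic or a direct product of two cyclic groups). -/
def IsBicyclic {G : Type} [Group G] (A : Subgroup G) : Prop :=
  (∀ x y : A, x * y = y * x) ∧ ∃ a b : G, A = Subgroup.closure {a, b}

/-- The Bogomolov multiplier `B₀(G) ⊆ H²(G, ℚ/ℤ)` is trivial, phrased at the level of
2-cocycles: every 2-cocycle whose restriction to each bicyclic subgroup is a coboundary
(i.e. whose class restricts to zero on each bicyclic subgroup) is itself a coboundary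
(i.e. its class is zero). -/
def BogomolovMultiplierIsTrivial (G : Type) [Group G] : Prop :=
  ∀ f : G → G → QZ, IsTwoCocycle f →
    (∀ A : Subgroup G, IsBicyclic A → IsTwoCoboundary (fun a b : ↥A => f ↑a ↑b)) →
    IsTwoCoboundary f

/-- The Bogomolov multiplier `B₀(G) ⊆ H²(G, ℚ/ℤ)` is nontrivial, phrased at the level of
2-cocycles. -/
def BogomolovMultiplierIsNontrivial (G : Type) [Group G] : Prop :=
  ∃ f : G → G → QZ, IsTwoCocycle f ∧
    (∀ A : Subgroup G, IsBicyclic A → IsTwoCoboundary (fun a b : ↥A => f ↑a ↑b)) ∧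
    ¬ IsTwoCoboundary f

/-- The generators. -/
inductive Gen | a | a1 | a2 | a3 | a4 | a5

open FreeGroup

/-- The commutator `[x,y] = x⁻¹y⁻¹xy`. -/
def c (x y : FreeGroup Gen) : FreeGroup Gen := x⁻¹ * y⁻¹ * x * y

/-- The defining relators. -/
def rels (p : ℕ) : Set (FreeGroup Gen) :=
  { c (of .a1) (of .a) * (of Gen.a2)⁻¹,
    c (of .a2) (of .a) * (of Gen.a3)⁻¹,
    c (of .a3) (of .a) * (of Gen.a4)⁻¹,
    c (of .a2) (of .a3) * (of Gen.a5)⁻¹,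
    c (of .a3) (of .a1) * (of Gen.a5)⁻¹,
    c (of .a4) (of .a1) * (of Gen.a5)⁻¹,
    c (of .a) (of .a4),
    c (of .a) (of .a5),
    c (of .a1) (of .a2),
    c (of .a1) (of .a5),
    c (of .a2) (of .a4),
    c (of .a2) (of .a5),
    c (of .a3) (of .a4),
    c (of .a3) (of .a5),
    c (of .a4) (of .a5),
    (of Gen.a) ^ p,
    (of Gen.a1) ^ p,
    (of Gen.a2) ^ p,
    (of Gen.a3) ^ p,
    (of Gen.a4) ^ p,
    (of Gen.a5) ^ p }

/-!
A class of `B₀(G)` is represented by a cocycle `f` that is a coboundary on every bicyclic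
subgroup, so `f x y = f y x` whenever `x` and `y` commute. In the central extension `E` of `G`
by `ℚ/ℤ` defined by `f` this says exactly that lifts of commuting elements commute. As `ℚ/ℤ` is
divisible, `α` and `α₁` lift to elements `A`, `A₁` of order dividing `p`; set
`A₂ = [A₁, A]`, `A₃ = [A₂, A]`, `A₄ = [A₃, A]`, `A₅ = [A₂, A₃]`. The trivial commutators lift
directly, and so do `[A₃, A₁] = A₅` and `[A₄, A₁] = A₅`, because in `G` they amount to `α₃`
commuting with `α₂α₁` and `α₁` commuting with `α₃⁻¹α₄`. The `p`-th power relations then follow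
from the expansion `[x, yⁿ] = [x, y]ⁿ [x, y, y]^(n choose 2)` for `p` odd. Hence the defining
relations hold for the `Aᵢ`, which gives a homomorphic section of `E → G`, and `f` is a
coboundary.
-/

section Commutator

variable {H : Type*} [Group H]

/-- The commutator with the paper's convention `[x, y] = x⁻¹y⁻¹xy`; Mathlib's `⁅x, y⁆` is
`xyx⁻¹y⁻¹`. -/
def cmt (x y : H) : H := x⁻¹ * y⁻¹ * x * y

lemma cmt_one_left (y : H) : cmt 1 y = 1 := by simp [cmt]

lemma cmt_one_right (x : H) : cmt x 1 = 1 := by simp [cmt]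

lemma cmt_eq_one_iff {x y : H} : cmt x y = 1 ↔ Commute x y := by
  rw [cmt, show x⁻¹ * y⁻¹ * x * y = (y * x)⁻¹ * (x * y) by group, inv_mul_eq_one]
  exact eq_comm

lemma cmt_inv (x y : H) : (cmt x y)⁻¹ = cmt y x := by
  simp only [cmt]; group

lemma cmt_mul_right (x y z : H) : cmt x (y * z) = cmt x z * (z⁻¹ * cmt x y * z) := by
  simp only [cmt]; group

lemma map_cmt {K : Type*} [Group K] (φ : H →* K) (x y : H) :
    φ (cmt x y) = cmt (φ x) (φ y) := by
  simp [cmt]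

lemma cmt_inv_left_of_commute {x y : H} (h : Commute x (cmt x y)) : cmt x⁻¹ y = cmt y x := by
  rw [show cmt x⁻¹ y = x * (cmt x y)⁻¹ * x⁻¹ by simp only [cmt]; group,
    h.inv_right.eq, mul_inv_cancel_right, cmt_inv]

lemma commute_mul_right_iff {x y z : H} (h : Commute (cmt x y) z) :
    Commute x (y * z) ↔ cmt x z = cmt y x := by
  rw [← cmt_eq_one_iff, cmt_mul_right, h.symm.inv_mul_cancel, mul_eq_one_iff_eq_inv, cmt_inv]

lemma cmt_pow_right_of_commute₂ {x y : H} (hy : Commute (cmt (cmt x y) y) y)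
    (hc : Commute (cmt (cmt x y) y) (cmt x y)) (n : ℕ) :
    cmt x (y ^ n) = cmt x y ^ n * cmt (cmt x y) y ^ n.choose 2 := by
  set c := cmt x y
  set d := cmt c y
  have hconj : ∀ g, y⁻¹ * g * y = MulAut.conj y⁻¹ g := by simp
  have hcy : y⁻¹ * c * y = c * d := by simp only [d, cmt]; group
  induction n with
  | zero => simp [cmt_one_right]
  | succ n ih =>
    rw [pow_succ, cmt_mul_right, ih, hconj, _root_.map_mul, _root_.map_pow, _root_.map_pow,
      ← hconj, ← hconj, hcy, hy.symm.inv_mul_cancel, hc.symm.mul_pow, Nat.choose_succ_succ,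
      Nat.choose_one_right, pow_succ', pow_add]
    simp only [mul_assoc]
    rfl

lemma cmt_pow_right_of_commute {x y : H} (h : Commute (cmt x y) y) (n : ℕ) :
    cmt x (y ^ n) = cmt x y ^ n := by
  have hd : cmt (cmt x y) y = 1 := cmt_eq_one_iff.mpr h
  rw [cmt_pow_right_of_commute₂ (by rw [hd]; exact .one_left _) (by rw [hd]; exact .one_left _) n,
    hd, one_pow, mul_one]

lemma cmt_pow_left_of_commute {x y : H} (h : Commute (cmt x y) x) (n : ℕ) :
    cmt (x ^ n) y = cmt x y ^ n := by
  rw [← cmt_inv, cmt_pow_right_of_commute (by rw [← cmt_inv]; exact h.inv_left), ← cmt_inv,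
    inv_pow, inv_inv]

end Commutator

lemma map_c {H : Type*} [Group H] (φ : FreeGroup Gen →* H) (x y : FreeGroup Gen) :
    φ (c x y) = cmt (φ x) (φ y) :=
  map_cmt φ x y

structure Phi37CommRels {H : Type*} [Group H] (v : Gen → H) : Prop where
  cmt_a1_a : cmt (v .a1) (v .a) = v .a2
  cmt_a2_a : cmt (v .a2) (v .a) = v .a3
  cmt_a3_a : cmt (v .a3) (v .a) = v .a4
  cmt_a2_a3 : cmt (v .a2) (v .a3) = v .a5
  cmt_a3_a1 : cmt (v .a3) (v .a1) = v .a5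
  cmt_a4_a1 : cmt (v .a4) (v .a1) = v .a5
  commute_a_a4 : Commute (v .a) (v .a4)
  commute_a_a5 : Commute (v .a) (v .a5)
  commute_a1_a2 : Commute (v .a1) (v .a2)
  commute_a1_a5 : Commute (v .a1) (v .a5)
  commute_a2_a4 : Commute (v .a2) (v .a4)
  commute_a2_a5 : Commute (v .a2) (v .a5)
  commute_a3_a4 : Commute (v .a3) (v .a4)
  commute_a3_a5 : Commute (v .a3) (v .a5)
  commute_a4_a5 : Commute (v .a4) (v .a5)

lemma Gen.forall {P : Gen → Prop} :
    (∀ g, P g) ↔ P .a ∧ P .a1 ∧ P .a2 ∧ P .a3 ∧ P .a4 ∧ P .a5 :=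
  ⟨fun h => ⟨h _, h _, h _, h _, h _, h _⟩, fun ⟨h, h1, h2, h3, h4, h5⟩ g => by
    cases g <;> assumption⟩

lemma lift_rels_eq_one_iff {H : Type*} [Group H] {v : Gen → H} {p : ℕ} :
    (∀ r ∈ rels p, FreeGroup.lift v r = 1) ↔ Phi37CommRels v ∧ ∀ g, v g ^ p = 1 := by
  simp only [rels, Set.mem_insert_iff, Set.mem_singleton_iff, forall_eq_or_imp, forall_eq,
    _root_.map_mul, _root_.map_inv, _root_.map_pow, map_c, lift_apply_of, mul_inv_eq_one,
    cmt_eq_one_iff, Gen.forall]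
  constructor
  · rintro ⟨h1, h2, h3, h4, h5, h6, h7, h8, h9, h10, h11, h12, h13, h14, h15, hp⟩
    exact ⟨⟨h1, h2, h3, h4, h5, h6, h7, h8, h9, h10, h11, h12, h13, h14, h15⟩, hp⟩
  · rintro ⟨⟨h1, h2, h3, h4, h5, h6, h7, h8, h9, h10, h11, h12, h13, h14, h15⟩, hp⟩
    exact ⟨h1, h2, h3, h4, h5, h6, h7, h8, h9, h10, h11, h12, h13, h14, h15, hp⟩

namespace Phi37CommRels

lemma pow_eq_one {H : Type*} [Group H] {v : Gen → H} (hv : Phi37CommRels v) {p : ℕ}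
    (hp : p.Prime) (hp2 : p ≠ 2) (ha : v .a ^ p = 1) (ha1 : v .a1 ^ p = 1) :
    ∀ g, v g ^ p = 1 := by
  have ha2 : v .a2 ^ p = 1 := by
    have h := cmt_pow_left_of_commute (x := v .a1) (y := v .a)
      (by rw [hv.cmt_a1_a]; exact hv.commute_a1_a2.symm) p
    rwa [ha1, cmt_one_left, hv.cmt_a1_a, eq_comm] at h
  have ha4 : v .a4 ^ p = 1 := by
    have h := cmt_pow_right_of_commute (x := v .a3) (y := v .a)
      (by rw [hv.cmt_a3_a]; exact hv.commute_a_a4.symm) p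
    rwa [ha, cmt_one_right, hv.cmt_a3_a, eq_comm] at h
  have ha5 : v .a5 ^ p = 1 := by
    have h := cmt_pow_right_of_commute (x := v .a3) (y := v .a1)
      (by rw [hv.cmt_a3_a1]; exact hv.commute_a1_a5.symm) p
    rwa [ha1, cmt_one_right, hv.cmt_a3_a1, eq_comm] at h
  have ha3 : v .a3 ^ p = 1 := by
    have h := cmt_pow_right_of_commute₂ (x := v .a2) (y := v .a)
      (by rw [hv.cmt_a2_a, hv.cmt_a3_a]; exact hv.commute_a_a4.symm)
      (by rw [hv.cmt_a2_a, hv.cmt_a3_a]; exact hv.commute_a3_a4.symm) p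
    obtain ⟨k, hk⟩ := hp.dvd_choose_self two_ne_zero (lt_of_le_of_ne hp.two_le hp2.symm)
    rwa [ha, cmt_one_right, hv.cmt_a2_a, hv.cmt_a3_a, hk, pow_mul, ha4, one_pow, mul_one,
      eq_comm] at h
  rw [Gen.forall]
  exact ⟨ha, ha1, ha2, ha3, ha4, ha5⟩

end Phi37CommRels

section Lifting

variable {E G : Type*} [Group E] [Group G] {π : E →* G}

/-- Both equations say that `X` (resp. `π X`) commutes with `Y * Z` (resp. `π Y * π Z`), see
`commute_mul_right_iff`, and this commutation lifts along `π`. -/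
lemma cmt_eq_cmt_of_map (hπ : ∀ X Y, Commute (π X) (π Y) → Commute X Y) {X Y Z : E}
    (hc : Commute (cmt (π X) (π Y)) (π Z)) (h : cmt (π X) (π Z) = cmt (π Y) (π X)) :
    cmt X Z = cmt Y X := by
  have hc' : Commute (cmt X Y) Z := hπ _ _ (by rwa [map_cmt])
  refine (commute_mul_right_iff hc').mp (hπ _ _ ?_)
  rw [_root_.map_mul]
  exact (commute_mul_right_iff hc).mpr h

def phi37Tuple (A A1 : E) : Gen → E
  | .a => A
  | .a1 => A1
  | .a2 => cmt A1 A
  | .a3 => cmt (cmt A1 A) A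
  | .a4 => cmt (cmt (cmt A1 A) A) A
  | .a5 => cmt (cmt A1 A) (cmt (cmt A1 A) A)

lemma map_phi37Tuple {v : Gen → G} (hv : Phi37CommRels v) {A A1 : E} (hA : π A = v .a)
    (hA1 : π A1 = v .a1) (g : Gen) : π (phi37Tuple A A1 g) = v g := by
  cases g <;>
    simp only [phi37Tuple, map_cmt, hA, hA1, hv.cmt_a1_a, hv.cmt_a2_a, hv.cmt_a3_a, hv.cmt_a2_a3]

lemma Phi37CommRels.lift (hπ : ∀ X Y, Commute (π X) (π Y) → Commute X Y)
    {v : Gen → G} (hv : Phi37CommRels v) {A A1 : E} (hA : π A = v .a) (hA1 : π A1 = v .a1) :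
    Phi37CommRels (phi37Tuple A A1) := by
  set V := phi37Tuple A A1
  have hV : ∀ g, π (V g) = v g := map_phi37Tuple hv hA hA1
  have hcomm : ∀ g h, Commute (v g) (v h) → Commute (V g) (V h) := fun g h hgh =>
    hπ _ _ (by rwa [hV, hV])
  have cmt_a3_a1 : cmt (V .a3) (V .a1) = V .a5 :=
    cmt_eq_cmt_of_map hπ (X := V .a3) (Y := V .a2) (Z := V .a1)
      (by rw [hV, hV, hV, ← cmt_inv, hv.cmt_a2_a3]; exact hv.commute_a1_a5.symm.inv_left)
      (by rw [hV, hV, hV, hv.cmt_a3_a1, hv.cmt_a2_a3])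
  have commute_a3_a5 : Commute (V .a3) (V .a5) := hcomm _ _ hv.commute_a3_a5
  have cmt_a1_a4 : cmt (V .a1) (V .a4) = cmt (V .a3)⁻¹ (V .a1) := by
    refine cmt_eq_cmt_of_map hπ (X := V .a1) (Y := (V .a3)⁻¹) (Z := V .a4) ?_ ?_ <;>
      simp only [_root_.map_inv, hV]
    · rw [← cmt_inv, cmt_inv_left_of_commute (by rw [hv.cmt_a3_a1]; exact hv.commute_a3_a5),
        cmt_inv, hv.cmt_a3_a1]
      exact hv.commute_a4_a5.symm
    · rw [cmt_inv_left_of_commute (by rw [hv.cmt_a3_a1]; exact hv.commute_a3_a5), ← cmt_inv,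
        hv.cmt_a4_a1, ← hv.cmt_a3_a1, cmt_inv]
  refine ⟨rfl, rfl, rfl, rfl, cmt_a3_a1, ?_, hcomm _ _ hv.commute_a_a4,
    hcomm _ _ hv.commute_a_a5, hcomm _ _ hv.commute_a1_a2, hcomm _ _ hv.commute_a1_a5,
    hcomm _ _ hv.commute_a2_a4, hcomm _ _ hv.commute_a2_a5, hcomm _ _ hv.commute_a3_a4,
    commute_a3_a5, hcomm _ _ hv.commute_a4_a5⟩
  rw [← cmt_inv, cmt_a1_a4, cmt_inv_left_of_commute (by rwa [cmt_a3_a1]), cmt_inv, cmt_a3_a1]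

end Lifting

lemma exists_splitting_of_lift {E : Type*} [Group E] {p : ℕ} (hp : p.Prime) (hp2 : p ≠ 2)
    (π : E →* PresentedGroup (rels p)) (hπ : ∀ X Y, Commute (π X) (π Y) → Commute X Y)
    (hlift : ∀ g : PresentedGroup (rels p), g ^ p = 1 → ∃ X, π X = g ∧ X ^ p = 1) :
    ∃ s : PresentedGroup (rels p) →* E, π.comp s = MonoidHom.id _ := by
  obtain ⟨hv, hvp⟩ := lift_rels_eq_one_iff.mp fun r hr => by
    rw [← lift_unique (PresentedGroup.mk (rels p)) fun _ => rfl]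
    exact PresentedGroup.one_of_mem hr
  obtain ⟨A, hA, hAp⟩ := hlift _ (hvp .a)
  obtain ⟨A1, hA1, hA1p⟩ := hlift _ (hvp .a1)
  have hV := hv.lift hπ hA hA1
  let s := PresentedGroup.toGroup (lift_rels_eq_one_iff.mpr ⟨hV, hV.pow_eq_one hp hp2 hAp hA1p⟩)
  refine ⟨s, PresentedGroup.ext fun g => ?_⟩
  rw [MonoidHom.comp_apply, PresentedGroup.toGroup.of, map_phi37Tuple hv hA hA1]
  rfl

section TwoCocycles

variable {G : Type} [Group G] {f : G → G → QZ}

lemma IsTwoCocycle.apply_one_left (hf : IsTwoCocycle f) (g : G) : f 1 g = f 1 1 := by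
  have h := hf 1 1 g
  rwa [one_mul, one_mul, sub_self, zero_add, sub_eq_zero] at h

lemma IsTwoCocycle.apply_one_right (hf : IsTwoCocycle f) (g : G) : f g 1 = f 1 1 := by
  have h := hf g 1 1
  rwa [mul_one, mul_one, sub_add_cancel, sub_eq_zero, eq_comm] at h

lemma IsTwoCocycle.add_apply_mul (hf : IsTwoCocycle f) (g h j : G) :
    f g h + f (g * h) j = f h j + f g (h * j) := by
  rw [← sub_eq_zero, ← neg_eq_zero, ← hf g h j]
  abel

lemma apply_comm_of_isBicyclic
    (hbic : ∀ A : Subgroup G, IsBicyclic A → IsTwoCoboundary (fun a b : A => f a b))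
    {x y : G} (hxy : Commute x y) : f x y = f y x := by
  set A := Subgroup.closure ({x, y} : Set G)
  have hA : ∀ a b : A, a * b = b * a := isMulCommutative_iff.mp <|
    Subgroup.isMulCommutative_closure <| by
      rintro a (rfl | rfl) b (rfl | rfl)
      exacts [rfl, hxy.eq, hxy.symm.eq, rfl]
  obtain ⟨c, hc⟩ := hbic A ⟨hA, x, y, rfl⟩
  beta_reduce at hc
  let X : A := ⟨x, Subgroup.subset_closure (by simp)⟩
  let Y : A := ⟨y, Subgroup.subset_closure (by simp)⟩
  change f X Y = f Y X
  rw [hc X Y, hc Y X, hA X Y]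
  abel

variable (f) in
@[ext]
structure CocycleExtension (hf : IsTwoCocycle f) where
  base : G
  fiber : QZ

namespace CocycleExtension

variable {hf : IsTwoCocycle f}

instance : Group (CocycleExtension f hf) where
  mul X Y := ⟨X.base * Y.base, X.fiber + Y.fiber + f X.base Y.base⟩
  one := ⟨1, -f 1 1⟩
  inv X := ⟨X.base⁻¹, -f 1 1 - X.fiber - f X.base⁻¹ X.base⟩
  mul_assoc X Y Z := by
    ext
    · exact mul_assoc _ _ _
    · show X.fiber + Y.fiber + f X.base Y.base + Z.fiber + f (X.base * Y.base) Z.base =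
        X.fiber + (Y.fiber + Z.fiber + f Y.base Z.base) + f X.base (Y.base * Z.base)
      linear_combination (norm := abel) hf.add_apply_mul X.base Y.base Z.base
  one_mul X := by
    ext
    · exact one_mul _
    · show -f 1 1 + X.fiber + f 1 X.base = X.fiber
      rw [hf.apply_one_left X.base]; abel
  mul_one X := by
    ext
    · exact mul_one _
    · show X.fiber + -f 1 1 + f X.base 1 = X.fiber
      rw [hf.apply_one_right X.base]; abel
  inv_mul_cancel X := by
    ext
    · exact inv_mul_cancel _
    · show -f 1 1 - X.fiber - f X.base⁻¹ X.base + X.fiber + f X.base⁻¹ X.base = -f 1 1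
      abel

lemma mul_base (X Y : CocycleExtension f hf) : (X * Y).base = X.base * Y.base := rfl

lemma mul_fiber (X Y : CocycleExtension f hf) :
    (X * Y).fiber = X.fiber + Y.fiber + f X.base Y.base := rfl

lemma one_base : (1 : CocycleExtension f hf).base = 1 := rfl

lemma one_fiber : (1 : CocycleExtension f hf).fiber = -f 1 1 := rfl

lemma pow_base (X : CocycleExtension f hf) (n : ℕ) : (X ^ n).base = X.base ^ n := by
  induction n with
  | zero => rw [pow_zero, pow_zero, one_base]
  | succ n ih => rw [pow_succ, mul_base, ih, pow_succ]

lemma mk_pow_fiber (a : G) (u : QZ) (n : ℕ) :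
    ((⟨a, u⟩ : CocycleExtension f hf) ^ n).fiber =
      n • u + ((⟨a, 0⟩ : CocycleExtension f hf) ^ n).fiber := by
  induction n with
  | zero => rw [pow_zero, pow_zero, zero_smul, zero_add]
  | succ n ih => simp only [pow_succ, mul_fiber, ih, pow_base, succ_nsmul]; abel

variable (f hf) in
def proj : CocycleExtension f hf →* G where
  toFun := base
  map_one' := rfl
  map_mul' _ _ := rfl

lemma commute_of_commute_proj (hsymm : ∀ x y, Commute x y → f x y = f y x)
    {X Y : CocycleExtension f hf} (h : Commute (proj f hf X) (proj f hf Y)) : Commute X Y := by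
  ext
  · exact h.eq
  · show X.fiber + Y.fiber + f X.base Y.base = Y.fiber + X.fiber + f Y.base X.base
    rw [hsymm X.base Y.base h, add_comm X.fiber]

lemma exists_proj_eq_pow_eq_one {n : ℕ} (hn : n ≠ 0) {a : G} (ha : a ^ n = 1) :
    ∃ X : CocycleExtension f hf, proj f hf X = a ∧ X ^ n = 1 := by
  set u := DivisibleBy.div (-f 1 1 - ((⟨a, 0⟩ : CocycleExtension f hf) ^ n).fiber) (n : ℤ)
  refine ⟨⟨a, u⟩, rfl, ?_⟩
  ext
  · rw [pow_base, ha, one_base]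
  · rw [mk_pow_fiber, one_fiber, ← natCast_zsmul, DivisibleBy.div_cancel _ (by exact_mod_cast hn)]
    abel

lemma isTwoCoboundary_of_splitting (s : G →* CocycleExtension f hf)
    (hs : (proj f hf).comp s = MonoidHom.id G) : IsTwoCoboundary f := by
  have hbase : ∀ g, (s g).base = g := DFunLike.congr_fun hs
  refine ⟨fun g => -(s g).fiber, fun g h => ?_⟩
  have hmul := congrArg fiber (map_mul s g h)
  rw [mul_fiber, hbase, hbase] at hmul
  beta_reduce
  rw [hmul]
  abel

end CocycleExtension

end TwoCocycles

theorem bogomolov_trivial_Phi37_general (p : ℕ) (hp : p.Prime) (h3 : 3 < p) :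
    BogomolovMultiplierIsTrivial (PresentedGroup (rels p)) := by
  intro f hf hbic
  obtain ⟨s, hs⟩ := exists_splitting_of_lift hp (by omega) (CocycleExtension.proj f hf)
    (fun _ _ => CocycleExtension.commute_of_commute_proj fun _ _ => apply_comm_of_isBicyclic hbic)
    (fun _ => CocycleExtension.exists_proj_eq_pow_eq_one hp.ne_zero)
  exact CocycleExtension.isTwoCoboundary_of_splitting s hs

theorem bogomolov_trivial_Phi37 (p : ℕ) (hp : p.Prime) (h3 : 3 < p)
    (hcard : Nat.card (PresentedGroup (rels p)) = p ^ 6) :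
    BogomolovMultiplierIsTrivial (PresentedGroup (rels p)) :=
  bogomolov_trivial_Phi37_general p hp h3

end Stmt12
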